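/- arXiv:2301.04071 — 2 statements merged into one kernel-verified Lean document; each statement's English description precedes it below -/
import Mathlib

section
/- Let g : ℝ → ℝ be C⁴ with g(y) = O(y⁴) near 0. Then any solution y(x) of y'(x) = y² + g(y) with y(0) < 0 sufficiently small is defined for all x ≥ 0, satisfies y(x) < 0 and y(x) → 0 as x → ∞, and obeys the asymptotic expansion y(x) = -1/x + O(1/x²) as x → ∞. -/
/-!
Separation of variables. On `(-δ, 0)` the field `f y = y² + g y` is positive, and
`T z = ∫_{y₀}^{z} dw / f w` is the time a solution needs to get from `y₀` to `z`, so every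
solution satisfies `T (y x) = x` and the inverse function of `T` is a solution. Since
`1 / f w - 1 / w² = -g w / (f w * w²)` is bounded by `g = O(w⁴)`, we get
`T z = 1 / y₀ - 1 / z + O(1)`: hence `T z → ∞` as `z → 0⁻` (solutions are global and stay in
`[y₀, 0)`) and `1 / y x = -x + O(1)`, which inverts to `y x = -1 / x + O(1 / x²)`.
-/

open Set Asymptotics Filter Topology

theorem forall_mem_of_a_priori_bound {y : ℝ → ℝ} {U K : Set ℝ} {T : ℝ} (hU : IsOpen U)
    (hK : IsClosed K) (hKU : K ⊆ U) (hy : ContinuousOn y (Icc 0 T)) (h0 : y 0 ∈ U)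
    (hbound : ∀ t ∈ Icc 0 T, (∀ s ∈ Icc 0 t, y s ∈ U) → y t ∈ K) :
    ∀ t ∈ Icc 0 T, y t ∈ U := by
  by_contra! hexit
  -- `sInf S` is the first exit time from `U`: the bound holds before it, hence at it by continuity.
  set S := Icc 0 T ∩ y ⁻¹' Uᶜ
  have hSne : S.Nonempty := hexit
  have hS : IsClosed S := hy.preimage_isClosed_of_isClosed isClosed_Icc hU.isClosed_compl
  have hbdd : BddBelow S := ⟨0, fun s hs => hs.1.1⟩
  obtain ⟨⟨ht₁0, ht₁T⟩, ht₁U⟩ : sInf S ∈ S := hS.csInf_mem hSne hbdd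
  have hbefore : ∀ s ∈ Ico 0 (sInf S), y s ∈ U := fun s hs => by
    by_contra hsU
    exact (csInf_le hbdd ⟨⟨hs.1, hs.2.le.trans ht₁T⟩, hsU⟩).not_gt hs.2
  have hpos : 0 < sInf S := ht₁0.lt_of_ne fun h => ht₁U (h ▸ h0)
  have hmaps : MapsTo y (Ico 0 (sInf S)) K := fun s hs =>
    hbound s ⟨hs.1, hs.2.le.trans ht₁T⟩ fun r hr => hbefore r ⟨hr.1, hr.2.trans_lt hs.2⟩
  have hclos : sInf S ∈ closure (Ico 0 (sInf S)) := by
    rw [closure_Ico hpos.ne]; exact ⟨ht₁0, le_rfl⟩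
  have hcont : ContinuousWithinAt y (Ico 0 (sInf S)) (sInf S) :=
    (hy _ ⟨ht₁0, ht₁T⟩).mono fun s hs => ⟨hs.1, hs.2.le.trans ht₁T⟩
  exact ht₁U (hKU (hK.closure_subset (hcont.mem_closure hclos hmaps)))

noncomputable def travelTime (f : ℝ → ℝ) (y₀ z : ℝ) : ℝ := ∫ w in y₀..z, (f w)⁻¹

section Autonomous

variable {f : ℝ → ℝ} {a b y₀ : ℝ}

@[simp]
theorem travelTime_self : travelTime f y₀ y₀ = 0 :=
  intervalIntegral.integral_same

theorem hasStrictDerivAt_travelTime (hf : ContinuousOn f (Ioo a b))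
    (hpos : ∀ z ∈ Ioo a b, 0 < f z) (hy₀ : y₀ ∈ Ioo a b) {z : ℝ} (hz : z ∈ Ioo a b) :
    HasStrictDerivAt (travelTime f y₀) (f z)⁻¹ z := by
  have hinv : ContinuousOn (fun w => (f w)⁻¹) (Ioo a b) :=
    hf.inv₀ fun w hw => (hpos w hw).ne'
  exact intervalIntegral.integral_hasStrictDerivAt_right
    (hinv.mono (ordConnected_Ioo.uIcc_subset hy₀ hz)).intervalIntegrable
    (hinv.stronglyMeasurableAtFilter isOpen_Ioo z hz)
    (hinv.continuousAt (isOpen_Ioo.mem_nhds hz))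

theorem continuousOn_travelTime (hf : ContinuousOn f (Ioo a b))
    (hpos : ∀ z ∈ Ioo a b, 0 < f z) (hy₀ : y₀ ∈ Ioo a b) :
    ContinuousOn (travelTime f y₀) (Ioo a b) := fun _ hz =>
  (hasStrictDerivAt_travelTime hf hpos hy₀ hz).hasDerivAt.continuousAt.continuousWithinAt

theorem strictMonoOn_travelTime (hf : ContinuousOn f (Ioo a b))
    (hpos : ∀ z ∈ Ioo a b, 0 < f z) (hy₀ : y₀ ∈ Ioo a b) :
    StrictMonoOn (travelTime f y₀) (Ioo a b) := by
  refine strictMonoOn_of_deriv_pos (convex_Ioo a b) (continuousOn_travelTime hf hpos hy₀) ?_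
  intro z hz
  rw [interior_Ioo] at hz
  rw [(hasStrictDerivAt_travelTime hf hpos hy₀ hz).hasDerivAt.deriv]
  exact inv_pos.2 (hpos z hz)

theorem travelTime_solution_eq (hf : ContinuousOn f (Ioo a b))
    (hpos : ∀ z ∈ Ioo a b, 0 < f z) {y : ℝ → ℝ}
    (hy : ∀ x ∈ Ici (0 : ℝ), HasDerivWithinAt y (f (y x)) (Ici 0) x) {t : ℝ} (ht : 0 ≤ t)
    (hmem : ∀ s ∈ Icc 0 t, y s ∈ Ioo a b) : travelTime f (y 0) (y t) = t := by
  have hy₀ := hmem 0 ⟨le_rfl, ht⟩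
  have hcont : ContinuousOn y (Icc 0 t) := fun s hs => (hy s hs.1).continuousWithinAt.mono
    fun r hr => hr.1
  refine eq_of_has_deriv_right_eq (f' := fun _ => 1) (fun s hs => ?_)
    (fun s _ => hasDerivWithinAt_id s (Ici s))
    ((continuousOn_travelTime hf hpos hy₀).comp hcont fun s hs => hmem s hs) continuousOn_id
    travelTime_self t ⟨ht, le_rfl⟩
  have hys := hmem s (Ico_subset_Icc_self hs)
  have hcomp := (hasStrictDerivAt_travelTime hf hpos hy₀ hys).hasDerivAt.comp_hasDerivWithinAt
    s ((hy s hs.1).mono (Ici_subset_Ici.2 hs.1))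
  rwa [inv_mul_cancel₀ (hpos _ hys).ne'] at hcomp

theorem exists_gt_lt_travelTime (htend : Tendsto (travelTime f y₀) (𝓝[<] b) atTop)
    (hy₀ : y₀ < b) (t : ℝ) : ∃ c ∈ Ioo y₀ b, t < travelTime f y₀ c :=
  ((htend.eventually_gt_atTop t).and (Ioo_mem_nhdsLT hy₀)).exists.imp fun _ h => ⟨h.2, h.1⟩

theorem solution_mem_Ico_and_travelTime_eq (hf : ContinuousOn f (Ioo a b))
    (hpos : ∀ z ∈ Ioo a b, 0 < f z) {y : ℝ → ℝ} (hy₀ : y 0 ∈ Ioo a b)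
    (hy : ∀ x ∈ Ici (0 : ℝ), HasDerivWithinAt y (f (y x)) (Ici 0) x)
    (htend : Tendsto (travelTime f (y 0)) (𝓝[<] b) atTop) {t : ℝ} (ht : 0 ≤ t) :
    y t ∈ Ico (y 0) b ∧ travelTime f (y 0) (y t) = t := by
  have hmono := strictMonoOn_travelTime hf hpos hy₀
  obtain ⟨c, hc, htc⟩ := exists_gt_lt_travelTime htend hy₀.2 t
  have hcU : c ∈ Ioo a b := ⟨hy₀.1.trans hc.1, hc.2⟩
  have hstay : ∀ s ∈ Icc 0 t, y s ∈ Ioo a b := by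
    refine forall_mem_of_a_priori_bound isOpen_Ioo isClosed_Icc
      (Icc_subset_Ioo hy₀.1 hc.2) (fun s hs => (hy s hs.1).continuousWithinAt.mono
        fun r hr => hr.1) hy₀ fun s hs hmem => ?_
    have hys := travelTime_solution_eq hf hpos hy hs.1 hmem
    have hsU := hmem s ⟨hs.1, le_rfl⟩
    constructor
    · rw [← hmono.le_iff_le hy₀ hsU, hys, travelTime_self]; exact hs.1
    · rw [← hmono.le_iff_le hsU hcU, hys]; exact hs.2.trans htc.le
  have hyt := travelTime_solution_eq hf hpos hy ht hstay
  have htU := hstay t ⟨ht, le_rfl⟩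
  refine ⟨⟨?_, htU.2⟩, hyt⟩
  rw [← hmono.le_iff_le hy₀ htU, hyt, travelTime_self]
  exact ht

theorem surjOn_travelTime (hf : ContinuousOn f (Ioo a b)) (hpos : ∀ z ∈ Ioo a b, 0 < f z)
    (hy₀ : y₀ ∈ Ioo a b) (htend : Tendsto (travelTime f y₀) (𝓝[<] b) atTop) :
    SurjOn (travelTime f y₀) (Ioo a b) (Ici 0) := by
  intro t ht
  obtain ⟨c, hc, htc⟩ := exists_gt_lt_travelTime htend hy₀.2 t
  have hsub : Icc y₀ c ⊆ Ioo a b := Icc_subset_Ioo hy₀.1 hc.2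
  obtain ⟨z, hz, rfl⟩ := intermediate_value_Icc hc.1.le
    ((continuousOn_travelTime hf hpos hy₀).mono hsub) ⟨by simpa using ht, htc.le⟩
  exact ⟨z, hsub hz, rfl⟩

theorem exists_solution_of_tendsto_travelTime (hf : ContinuousOn f (Ioo a b))
    (hpos : ∀ z ∈ Ioo a b, 0 < f z) (hy₀ : y₀ ∈ Ioo a b)
    (htend : Tendsto (travelTime f y₀) (𝓝[<] b) atTop) :
    ∃ y : ℝ → ℝ, y 0 = y₀ ∧ ∀ x ∈ Ici (0 : ℝ), HasDerivWithinAt y (f (y x)) (Ici 0) x := by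
  have hinj := (strictMonoOn_travelTime hf hpos hy₀).injOn
  have hsurj := surjOn_travelTime hf hpos hy₀ htend
  set y := Function.invFunOn (travelTime f y₀) (Ioo a b)
  have hyU : ∀ x ∈ Ici (0 : ℝ), y x ∈ Ioo a b := fun _ hx => hsurj.mapsTo_invFunOn hx
  refine ⟨y, hinj (hyU 0 self_mem_Ici) hy₀ ?_, fun x hx => ?_⟩
  · rw [hsurj.rightInvOn_invFunOn self_mem_Ici, travelTime_self]
  have hleft : ∀ᶠ z in 𝓝 (y x), y (travelTime f y₀ z) = z :=
    eventually_of_mem (isOpen_Ioo.mem_nhds (hyU x hx)) fun z hz =>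
      hinj.leftInvOn_invFunOn hz
  have hderiv := (hasStrictDerivAt_travelTime hf hpos hy₀ (hyU x hx)).to_local_left_inverse
    (inv_ne_zero (hpos _ (hyU x hx)).ne') hleft
  rw [inv_inv, hsurj.rightInvOn_invFunOn hx] at hderiv
  exact hderiv.hasDerivAt.hasDerivWithinAt

end Autonomous

section NearlyQuadratic

variable {f : ℝ → ℝ} {a y₀ L : ℝ}

theorem abs_travelTime_add_inv_sub_inv_le (hf : ContinuousOn f (Ioo a 0))
    (hpos : ∀ z ∈ Ioo a 0, 0 < f z) (hy₀ : y₀ ∈ Ioo a 0)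
    (hL : ∀ w ∈ Ioo a 0, |(f w)⁻¹ - (w ^ 2)⁻¹| ≤ L) {z : ℝ} (hz : z ∈ Ioo a 0) :
    |travelTime f y₀ z + z⁻¹ - y₀⁻¹| ≤ L * |a| := by
  have hdist : |z - y₀| ≤ |a| := by
    rw [abs_le, abs_of_neg (hy₀.1.trans hy₀.2)]
    constructor <;> linarith [hz.1, hz.2, hy₀.1, hy₀.2]
  have hderiv : ∀ w ∈ Ioo a 0, HasDerivWithinAt (fun w => travelTime f y₀ w + w⁻¹)
      ((f w)⁻¹ - (w ^ 2)⁻¹) (Ioo a 0) w := fun w hw =>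
    ((hasStrictDerivAt_travelTime hf hpos hy₀ hw).hasDerivAt.add
      (hasDerivAt_inv hw.2.ne)).hasDerivWithinAt
  have hmvt := (convex_Ioo a 0).norm_image_sub_le_of_norm_hasDerivWithin_le hderiv hL hy₀ hz
  simp only [travelTime_self, zero_add, Real.norm_eq_abs] at hmvt
  exact hmvt.trans (mul_le_mul_of_nonneg_left hdist ((abs_nonneg _).trans (hL z hz)))

theorem tendsto_travelTime_nhdsLT_zero (hf : ContinuousOn f (Ioo a 0))
    (hpos : ∀ z ∈ Ioo a 0, 0 < f z) (hy₀ : y₀ ∈ Ioo a 0)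
    (hL : ∀ w ∈ Ioo a 0, |(f w)⁻¹ - (w ^ 2)⁻¹| ≤ L) :
    Tendsto (travelTime f y₀) (𝓝[<] 0) atTop := by
  have hlower : ∀ᶠ z in 𝓝[<] (0 : ℝ), y₀⁻¹ - L * |a| - z⁻¹ ≤ travelTime f y₀ z := by
    filter_upwards [Ioo_mem_nhdsLT (hy₀.1.trans hy₀.2)] with z hz
    linarith [(abs_le.1 (abs_travelTime_add_inv_sub_inv_le hf hpos hy₀ hL hz)).1]
  exact tendsto_atTop_mono' _ hlower
    (tendsto_atTop_add_const_left _ _ (tendsto_neg_atBot_atTop.comp tendsto_inv_nhdsLT_zero))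

theorem abs_inv_solution_add_le (hf : ContinuousOn f (Ioo a 0))
    (hpos : ∀ z ∈ Ioo a 0, 0 < f z) (hL : ∀ w ∈ Ioo a 0, |(f w)⁻¹ - (w ^ 2)⁻¹| ≤ L)
    {y : ℝ → ℝ} (hy₀ : y 0 ∈ Ioo a 0)
    (hy : ∀ x ∈ Ici (0 : ℝ), HasDerivWithinAt y (f (y x)) (Ici 0) x) {x : ℝ} (hx : 0 ≤ x) :
    |(y x)⁻¹ + x| ≤ L * |a| + |(y 0)⁻¹| := by
  obtain ⟨hyx, htime⟩ := solution_mem_Ico_and_travelTime_eq hf hpos hy₀ hy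
    (tendsto_travelTime_nhdsLT_zero hf hpos hy₀ hL) hx
  have hclose := abs_travelTime_add_inv_sub_inv_le hf hpos hy₀ hL ⟨hy₀.1.trans_le hyx.1, hyx.2⟩
  rw [htime] at hclose
  calc |(y x)⁻¹ + x| = |(x + (y x)⁻¹ - (y 0)⁻¹) + (y 0)⁻¹| := by ring_nf
    _ ≤ L * |a| + |(y 0)⁻¹| := (abs_add_le _ _).trans (add_le_add hclose le_rfl)

end NearlyQuadratic

theorem eventually_pos_and_abs_inv_sub_inv_sq_le {g : ℝ → ℝ}
    (hgo : g =O[𝓝 0] fun y : ℝ => y ^ 4) :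
    ∃ L, ∀ᶠ w in 𝓝[<] 0, 0 < w ^ 2 + g w ∧ |(w ^ 2 + g w)⁻¹ - (w ^ 2)⁻¹| ≤ L := by
  obtain ⟨c, hc0, hc⟩ := hgo.exists_pos
  have hsmall := (hgo.trans_isLittleO (isLittleO_pow_pow (by norm_num : 2 < 4))).def
    (by norm_num : (0 : ℝ) < 1 / 2)
  refine ⟨2 * c, ?_⟩
  filter_upwards [nhdsWithin_le_nhds hc.bound, nhdsWithin_le_nhds hsmall,
    self_mem_nhdsWithin] with w hbig hhalf (hw : w < 0)
  simp only [Real.norm_eq_abs] at hbig hhalf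
  rw [abs_of_nonneg (by positivity : (0 : ℝ) ≤ w ^ 4)] at hbig
  rw [abs_of_nonneg (sq_nonneg w)] at hhalf
  have hw2 : 0 < w ^ 2 := sq_pos_of_neg hw
  have hf : w ^ 2 / 2 ≤ w ^ 2 + g w := by linarith [(abs_le.1 hhalf).1]
  have hfpos : 0 < w ^ 2 + g w := by linarith
  refine ⟨hfpos, ?_⟩
  rw [inv_sub_inv hfpos.ne' hw2.ne', abs_div, abs_of_pos (mul_pos hfpos hw2),
    div_le_iff₀ (mul_pos hfpos hw2), sub_add_cancel_left, abs_neg]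
  calc |g w| ≤ c * w ^ 4 := hbig
    _ = 2 * c * (w ^ 2 / 2 * w ^ 2) := by ring
    _ ≤ 2 * c * ((w ^ 2 + g w) * w ^ 2) := by gcongr

theorem abs_add_inv_le_of_abs_inv_add_le {u x M : ℝ} (hx : 0 < x) (hMx : 2 * M ≤ x)
    (h : |u⁻¹ + x| ≤ M) : |u + x⁻¹| ≤ 2 * M / x ^ 2 := by
  have hinv : x / 2 ≤ |u⁻¹| := by linarith [(abs_le.1 h).2, neg_le_abs u⁻¹]
  have hu : u ≠ 0 := by
    rintro rfl
    rw [inv_zero, abs_zero] at hinv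
    linarith
  have hu_le : |u| ≤ 2 / x :=
    calc |u| = |u⁻¹|⁻¹ := by rw [abs_inv, inv_inv]
      _ ≤ (x / 2)⁻¹ := inv_anti₀ (by positivity) hinv
      _ = 2 / x := inv_div x 2
  calc |u + x⁻¹| = |u| * x⁻¹ * |u⁻¹ + x| := by
        rw [← abs_of_pos (inv_pos.2 hx), ← abs_mul, ← abs_mul, abs_of_pos (inv_pos.2 hx)]
        congr 1
        field_simp
        ring
    _ ≤ 2 / x * x⁻¹ * M := by gcongr
    _ = 2 * M / x ^ 2 := by field_simp

theorem tendsto_zero_of_abs_inv_add_le {u : ℝ → ℝ} {M : ℝ}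
    (h : ∀ᶠ x in atTop, |(u x)⁻¹ + x| ≤ M) : Tendsto u atTop (𝓝 0) := by
  have hinv : Tendsto (fun x => (u x)⁻¹) atTop atBot :=
    tendsto_atBot_mono' _ (h.mono fun x hx => by linarith [(abs_le.1 hx).2])
      (tendsto_atBot_add_const_left _ M tendsto_neg_atTop_atBot)
  simpa [Function.comp_def] using tendsto_inv_atBot_zero.comp hinv

/-- If g is C⁴ with g(y) = O(y⁴) near 0, then for all sufficiently small negative initial
data the solution of y' = y² + g(y) exists globally for x ≥ 0, stays negative, converges
to 0, and satisfies y(x) = -1/x + O(1/x²) as x → ∞. -/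
theorem degenerate_saddle_asymptotics (g : ℝ → ℝ) (hg : ContDiff ℝ 4 g)
    (hgo : g =O[nhds 0] fun y : ℝ => y ^ 4) :
    ∃ δ : ℝ, 0 < δ ∧ ∀ y₀ ∈ Set.Ioo (-δ) (0 : ℝ),
      (∃ y : ℝ → ℝ, y 0 = y₀ ∧
        ∀ x ∈ Set.Ici (0 : ℝ),
          HasDerivWithinAt y ((y x) ^ 2 + g (y x)) (Set.Ici (0 : ℝ)) x) ∧
      (∀ y : ℝ → ℝ, y 0 = y₀ →
        (∀ x ∈ Set.Ici (0 : ℝ),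
          HasDerivWithinAt y ((y x) ^ 2 + g (y x)) (Set.Ici (0 : ℝ)) x) →
        (∀ x : ℝ, 0 ≤ x → y x < 0) ∧
        Tendsto y atTop (nhds 0) ∧
        ∃ C X : ℝ, 0 < C ∧ 0 < X ∧ ∀ x : ℝ, X ≤ x → |y x + 1 / x| ≤ C / x ^ 2) := by
  obtain ⟨L, hL⟩ := eventually_pos_and_abs_inv_sub_inv_sq_le hgo
  obtain ⟨a, ha, hsub⟩ := mem_nhdsLT_iff_exists_Ioo_subset.1 hL
  have hpos : ∀ z ∈ Ioo a 0, 0 < z ^ 2 + g z := fun z hz => (hsub hz).1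
  have hbound : ∀ z ∈ Ioo a 0, |(z ^ 2 + g z)⁻¹ - (z ^ 2)⁻¹| ≤ L := fun z hz => (hsub hz).2
  have hf : ContinuousOn (fun z => z ^ 2 + g z) (Ioo a 0) :=
    ((continuous_pow 2).add hg.continuous).continuousOn
  refine ⟨-a, neg_pos.2 ha, fun y₀ hy₀ => ?_⟩
  rw [neg_neg] at hy₀
  have htend := tendsto_travelTime_nhdsLT_zero hf hpos hy₀ hbound
  refine ⟨exists_solution_of_tendsto_travelTime hf hpos hy₀ htend, fun y hy0 hy => ?_⟩
  subst hy0
  set M := L * |a| + |(y 0)⁻¹|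
  have hM : 0 < M := add_pos_of_nonneg_of_pos
    (mul_nonneg ((abs_nonneg _).trans (hbound _ hy₀)) (abs_nonneg a))
    (abs_pos.2 (inv_ne_zero hy₀.2.ne))
  have hinv := fun x (hx : 0 ≤ x) => abs_inv_solution_add_le hf hpos hbound hy₀ hy hx
  refine ⟨fun x hx => (solution_mem_Ico_and_travelTime_eq hf hpos hy₀ hy htend hx).1.2,
    tendsto_zero_of_abs_inv_add_le ((eventually_ge_atTop 0).mono hinv),
    2 * M, 2 * M, by positivity, by positivity, fun x hx => ?_⟩
  rw [one_div]
  exact abs_add_inv_le_of_abs_inv_add_le (by linarith) hx (hinv x (by linarith))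
end

section
/- Let g : ℝ → ℝ be C³ with g(y) = O(|y|³) near 0. Then any solution y(x) of y' = y² + g(y) with y(0) < 0 sufficiently small satisfies, for every β ∈ [0,1), the expansion y(x) = -1/x + O(x^{-(1+β)}) as x → ∞. -/
open Real Set Asymptotics Filter

/-!
For small `δ` the perturbation satisfies `|g z| ≤ M |z|³ ≤ z² / 2` on `(-δ, 0)`. There `y` is
nondecreasing and lies below the solution of `z' = 2 z²` with the same initial value, so `y` never
leaves `(-δ, 0)`. The function `u = -1/y` then satisfies `u' = 1 + g(y)/y²` with
`|g(y)/y²| ≤ M |y| = M / u`: first `|u' - 1| ≤ 1/2` gives `u x ≥ u 0 + x/2`, and then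
`|u' - 1| ≤ 2M/(1 + x)` gives `|u x - x - u 0| ≤ 2M log (1 + x)`. Finally
`y x + 1/x = (u x - x)/(x u x) = O(log x / x²)`, and `log (1 + x) ≤ 2 x^(1-β) / (1-β)`.
-/

theorem ContinuousOn.mapsTo_Ici_of_mapsTo_Ico {α β : Type*} [ConditionallyCompleteLinearOrder α]
    [TopologicalSpace α] [OrderTopology α] [TopologicalSpace β] {f : α → β} {U : Set β}
    {a : α} (hU : IsOpen U) (hf : ContinuousOn f (Ici a))
    (h : ∀ b, a ≤ b → MapsTo f (Ico a b) U → f b ∈ U) : MapsTo f (Ici a) U := by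
  intro x hx
  by_contra hfx
  set T := Icc a x ∩ f ⁻¹' Uᶜ
  have hT : IsClosed T :=
    (hf.mono Icc_subset_Ici_self).preimage_isClosed_of_isClosed isClosed_Icc hU.isClosed_compl
  obtain ⟨⟨hab, hbx⟩, hfb⟩ : sInf T ∈ T :=
    hT.csInf_mem ⟨x, ⟨hx, le_rfl⟩, hfx⟩ ⟨a, fun t ht => ht.1.1⟩
  refine hfb (h _ hab fun t ht => ?_)
  by_contra hft
  exact ht.2.not_ge (csInf_le ⟨a, fun s hs => hs.1.1⟩ ⟨⟨ht.1, ht.2.le.trans hbx⟩, hft⟩)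

theorem norm_sub_le_sub_of_norm_deriv_le {E : Type*} [NormedAddCommGroup E] [NormedSpace ℝ E]
    {f f' : ℝ → E} {B B' : ℝ → ℝ} {a x : ℝ}
    (hf : ∀ t ∈ Ici a, HasDerivWithinAt f (f' t) (Ici a) t)
    (hB : ∀ t ∈ Ici a, HasDerivAt B (B' t) t) (hbound : ∀ t ∈ Ici a, ‖f' t‖ ≤ B' t)
    (hx : a ≤ x) : ‖f x - f a‖ ≤ B x - B a := by
  have hf' : ∀ t ∈ Ici a, HasDerivWithinAt (fun s => f s - f a) (f' t) (Ici t) t :=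
    fun t ht => ((hf t ht).mono (Ici_subset_Ici.2 ht)).sub_const _
  refine image_norm_le_of_norm_deriv_right_le_deriv_boundary' (B := fun s => B s - B a)
    (fun t ht => ((hf t ht.1).continuousWithinAt.mono Icc_subset_Ici_self).sub_const _)
    (fun t ht => hf' t ht.1) (by simp)
    (fun t ht => ((hB t ht.1).sub_const _).continuousAt.continuousWithinAt)
    (fun t ht => ((hB t ht.1).sub_const _).hasDerivWithinAt)
    (fun t ht => hbound t ht.1) ⟨hx, le_rfl⟩

theorem le_div_of_deriv_lt_two_mul_sq {y y' : ℝ → ℝ} {a b : ℝ} (hc : ContinuousOn y (Icc a b))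
    (hy : ∀ t ∈ Ico a b, HasDerivWithinAt y (y' t) (Ici t) t)
    (hlt : ∀ t ∈ Ico a b, y' t < 2 * y t ^ 2) (ha : y a < 0) :
    ∀ t ∈ Icc a b, y t ≤ y a / (1 - 2 * y a * (t - a)) := by
  -- the right-hand side solves `z' = 2 z²`
  have hden : ∀ t, a ≤ t → 0 < 1 - 2 * y a * (t - a) := fun t ht => by nlinarith
  have hB : ∀ t, a ≤ t → HasDerivAt (fun s => y a / (1 - 2 * y a * (s - a)))
      (2 * (y a / (1 - 2 * y a * (t - a))) ^ 2) t := by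
    intro t ht
    have h := (((hasDerivAt_id' t).sub_const a).const_mul (2 * y a)).const_sub 1
    refine ((hasDerivAt_const t (y a)).div h (hden t ht).ne').congr_deriv ?_
    field_simp
    ring
  refine image_le_of_deriv_right_lt_deriv_boundary' hc hy (by simp)
    (fun t ht => (hB t ht.1).continuousAt.continuousWithinAt)
    (fun t ht => (hB t ht.1).hasDerivWithinAt) fun t ht hyt => ?_
  rw [← hyt]
  exact hlt t ht

theorem mapsTo_Ioo_of_hasDerivWithinAt_sq_add {g y : ℝ → ℝ} {δ : ℝ}
    (hg : ∀ z ∈ Ioo (-δ) 0, |g z| ≤ z ^ 2 / 2) (hy0 : y 0 ∈ Ioo (-δ) 0)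
    (hy : ∀ x ∈ Ici (0 : ℝ), HasDerivWithinAt y (y x ^ 2 + g (y x)) (Ici 0) x) :
    MapsTo y (Ici 0) (Ioo (-δ) 0) := by
  have hc : ContinuousOn y (Ici 0) := fun x hx => (hy x hx).continuousWithinAt
  refine hc.mapsTo_Ici_of_mapsTo_Ico isOpen_Ioo fun b hb hyb => ?_
  have hgy : ∀ t ∈ Ico 0 b, |g (y t)| ≤ y t ^ 2 / 2 := fun t ht => hg _ (hyb ht)
  have hmono : MonotoneOn y (Icc 0 b) := by
    refine monotoneOn_of_hasDerivWithinAt_nonneg (f' := fun t => y t ^ 2 + g (y t))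
      (convex_Icc 0 b) (hc.mono Icc_subset_Ici_self) (fun t ht => ?_) fun t ht => ?_ <;>
      simp only [interior_Icc] at ht ⊢
    · exact (hy t ht.1.le).mono (Ioo_subset_Ioi_self.trans Ioi_subset_Ici_self)
    · nlinarith [abs_le.1 (hgy t ⟨ht.1.le, ht.2⟩)]
  have hlt : ∀ t ∈ Ico 0 b, y t ^ 2 + g (y t) < 2 * y t ^ 2 := fun t ht => by
    nlinarith [abs_le.1 (hgy t ht), (hyb ht).2]
  have hle := le_div_of_deriv_lt_two_mul_sq (hc.mono Icc_subset_Ici_self)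
    (fun t ht => (hy t ht.1).mono (Ici_subset_Ici.2 ht.1)) hlt hy0.2 b ⟨hb, le_rfl⟩
  refine ⟨hy0.1.trans_le (hmono ⟨le_rfl, hb⟩ ⟨hb, le_rfl⟩ hb), hle.trans_lt ?_⟩
  exact div_neg_of_neg_of_pos hy0.2 (by nlinarith [hy0.2])

theorem HasDerivWithinAt.neg_inv_of_sq_add {y : ℝ → ℝ} {c x : ℝ} {s : Set ℝ}
    (hy : HasDerivWithinAt y (y x ^ 2 + c) s x) (hx : y x ≠ 0) :
    HasDerivWithinAt (fun t => -(y t)⁻¹) (1 + c / y x ^ 2) s x := by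
  refine (hy.inv hx).neg.congr_deriv ?_
  field_simp

section NearIdentity

variable {u e : ℝ → ℝ} {x : ℝ}

theorem add_div_two_le_of_hasDerivWithinAt_one_add
    (hu : ∀ t ∈ Ici (0 : ℝ), HasDerivWithinAt u (1 + e t) (Ici 0) t)
    (he : ∀ t ∈ Ici (0 : ℝ), |e t| ≤ 1 / 2) (hx : 0 ≤ x) : u 0 + x / 2 ≤ u x := by
  have h := norm_sub_le_sub_of_norm_deriv_le (f := fun t => u t - t) (B := fun t => t / 2)
    (fun t ht => ((hu t ht).sub (hasDerivWithinAt_id t _)).congr_deriv (add_sub_cancel_left 1 _))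
    (fun t _ => (hasDerivAt_id' t).div_const 2) he hx
  simp only [Real.norm_eq_abs, sub_zero, zero_div] at h
  linarith [(abs_le.1 h).1]

theorem abs_sub_sub_le_mul_log_of_hasDerivWithinAt_one_add {M : ℝ}
    (hu : ∀ t ∈ Ici (0 : ℝ), HasDerivWithinAt u (1 + e t) (Ici 0) t)
    (he : ∀ t ∈ Ici (0 : ℝ), |e t| ≤ 1 / 2) (heu : ∀ t ∈ Ici (0 : ℝ), |e t| ≤ M / u t)
    (hM : 0 ≤ M) (hu0 : 1 / 2 ≤ u 0) (hx : 0 ≤ x) :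
    |u x - x - u 0| ≤ 2 * M * log (1 + x) := by
  have hB : ∀ t ∈ Ici (0 : ℝ), HasDerivAt (fun t => 2 * M * log (1 + t)) (2 * M / (1 + t)) t :=
    fun t ht => by
      have ht1 : 0 < 1 + t := add_pos_of_pos_of_nonneg one_pos ht
      simpa [div_eq_mul_inv] using
        (((hasDerivAt_id' t).const_add 1).log ht1.ne').const_mul (2 * M)
  have hbound : ∀ t ∈ Ici (0 : ℝ), |e t| ≤ 2 * M / (1 + t) := fun t ht => by
    have ht1 : 0 < 1 + t := add_pos_of_pos_of_nonneg one_pos ht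
    have hut : (1 + t) / 2 ≤ u t := by
      linarith [add_div_two_le_of_hasDerivWithinAt_one_add hu he ht]
    calc |e t| ≤ M / u t := heu t ht
      _ ≤ M / ((1 + t) / 2) := by gcongr
      _ = 2 * M / (1 + t) := by field_simp
  have h := norm_sub_le_sub_of_norm_deriv_le (f := fun t => u t - t)
    (fun t ht => ((hu t ht).sub (hasDerivWithinAt_id t _)).congr_deriv (add_sub_cancel_left 1 _))
    hB hbound hx
  simpa [sub_sub] using h

end NearIdentity

theorem log_one_add_le_two_mul_rpow_div {x s : ℝ} (hx : 1 ≤ x) (hs : 0 < s) (hs1 : s ≤ 1) :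
    log (1 + x) ≤ 2 * x ^ s / s := by
  have h2 : (2 : ℝ) ^ s ≤ 2 := by
    simpa using Real.rpow_le_rpow_of_exponent_le (by norm_num : (1 : ℝ) ≤ 2) hs1
  calc log (1 + x) ≤ (1 + x) ^ s / s := Real.log_le_rpow_div (by linarith) hs
    _ ≤ (2 * x) ^ s / s := by gcongr; linarith
    _ = 2 ^ s * x ^ s / s := by rw [Real.mul_rpow (by norm_num) (by linarith)]
    _ ≤ 2 * x ^ s / s := by gcongr

theorem abs_neg_inv_add_inv_le {u x : ℝ} (hx : 0 < x) (hu : x / 2 ≤ u) :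
    |-u⁻¹ + 1 / x| ≤ 2 * |u - x| / x ^ 2 := by
  have hu0 : 0 < u := by linarith
  rw [show -u⁻¹ + 1 / x = (u - x) / (x * u) by field_simp; ring, abs_div,
    abs_of_pos (mul_pos hx hu0), div_le_div_iff₀ (by positivity) (by positivity)]
  nlinarith [mul_le_mul_of_nonneg_left (show x ≤ 2 * u by linarith)
    (mul_nonneg (abs_nonneg (u - x)) hx.le)]

theorem abs_neg_inv_add_inv_le_div_rpow {u x A K β : ℝ} (hx : 1 ≤ x) (hu : x / 2 ≤ u)
    (hux : |u - x| ≤ A + K * log (1 + x)) (hA : 0 ≤ A) (hK : 0 ≤ K) (hβ : β ∈ Ico (0 : ℝ) 1) :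
    |-u⁻¹ + 1 / x| ≤ 2 * (A + 2 * K / (1 - β)) / x ^ (1 + β) := by
  have hx0 : 0 < x := by linarith
  have hs : 0 < 1 - β := by linarith [hβ.2]
  have hxs : 1 ≤ x ^ (1 - β) := Real.one_le_rpow hx hs.le
  have hsplit : x ^ 2 = x ^ (1 - β) * x ^ (1 + β) := by
    rw [← Real.rpow_add hx0, show 1 - β + (1 + β) = (2 : ℕ) by push_cast; ring,
      Real.rpow_natCast]
  have hlog := log_one_add_le_two_mul_rpow_div hx hs (by linarith [hβ.1])
  calc |-u⁻¹ + 1 / x| ≤ 2 * |u - x| / x ^ 2 := abs_neg_inv_add_inv_le hx0 hu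
    _ ≤ 2 * (A * x ^ (1 - β) + K * (2 * x ^ (1 - β) / (1 - β))) / x ^ 2 := by
      gcongr
      calc |u - x| ≤ A + K * log (1 + x) := hux
        _ ≤ _ := by gcongr; exact le_mul_of_one_le_right hA hxs
    _ = 2 * (A + 2 * K / (1 - β)) / x ^ (1 + β) := by
      rw [hsplit]
      field_simp

theorem exists_small_cubic_bound {g : ℝ → ℝ} (hgo : g =O[nhds 0] fun y : ℝ => |y| ^ 3) :
    ∃ δ M : ℝ, 0 < δ ∧ δ ≤ 1 ∧ 0 ≤ M ∧ δ * M ≤ 1 / 2 ∧ ∀ z, |z| < δ → |g z| ≤ M * |z| ^ 3 := by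
  obtain ⟨M, hM, hgM⟩ := hgo.exists_pos
  obtain ⟨r, hr, hball⟩ := Metric.eventually_nhds_iff.1 hgM.bound
  refine ⟨min r (min 1 (1 / (2 * M))), M, by positivity, (min_le_right _ _).trans (min_le_left _ _),
    hM.le, ?_, fun z hz => ?_⟩
  · calc min r (min 1 (1 / (2 * M))) * M ≤ 1 / (2 * M) * M := by
          gcongr; exact (min_le_right _ _).trans (min_le_right _ _)
      _ = 1 / 2 := by field_simp
  · simpa using hball (by simpa using hz.trans_le (min_le_left _ _))

theorem riccati_neg_inv_estimates {g y : ℝ → ℝ} {δ M x : ℝ} (hδ : δ ≤ 1) (hM : 0 ≤ M)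
    (hδM : δ * M ≤ 1 / 2) (hgM : ∀ z, |z| < δ → |g z| ≤ M * |z| ^ 3) (hy0 : y 0 ∈ Ioo (-δ) 0)
    (hy : ∀ x ∈ Ici (0 : ℝ), HasDerivWithinAt y (y x ^ 2 + g (y x)) (Ici 0) x) (hx : 0 ≤ x) :
    x / 2 ≤ -(y x)⁻¹ ∧ |-(y x)⁻¹ - x| ≤ -(y 0)⁻¹ + 2 * M * log (1 + x) := by
  have hcube : ∀ z ∈ Ioo (-δ) 0, |g z| ≤ M * -z * z ^ 2 := fun z hz => by
    have h := hgM z (abs_lt.2 ⟨hz.1, by linarith [hz.1, hz.2]⟩)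
    rwa [abs_of_neg hz.2, show M * (-z) ^ 3 = M * -z * z ^ 2 by ring] at h
  have hsmall : ∀ z ∈ Ioo (-δ) 0, M * -z ≤ 1 / 2 := fun z hz => by nlinarith [hz.1]
  have hmem := mapsTo_Ioo_of_hasDerivWithinAt_sq_add
    (fun z hz => by nlinarith [hcube z hz, hsmall z hz, sq_nonneg z]) hy0 hy
  set u := fun t => -(y t)⁻¹ with hu_def
  have hu : ∀ t ∈ Ici (0 : ℝ), HasDerivWithinAt u (1 + g (y t) / y t ^ 2) (Ici 0) t :=
    fun t ht => (hy t ht).neg_inv_of_sq_add (hmem ht).2.ne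
  have hMu : ∀ t, M / u t = M * -y t := fun t => by simp [hu_def, div_neg, div_inv_eq_mul]
  have heu : ∀ t ∈ Ici (0 : ℝ), |g (y t) / y t ^ 2| ≤ M / u t := fun t ht => by
    have hy2 : 0 < y t ^ 2 := by nlinarith [(hmem ht).2]
    rw [abs_div, abs_of_pos hy2, div_le_iff₀ hy2, hMu]
    exact hcube _ (hmem ht)
  have he : ∀ t ∈ Ici (0 : ℝ), |g (y t) / y t ^ 2| ≤ 1 / 2 := fun t ht =>
    (heu t ht).trans ((hMu t).symm ▸ hsmall _ (hmem ht))
  have hu0 : 1 ≤ u 0 := by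
    show 1 ≤ -(y 0)⁻¹
    rw [← inv_neg, one_le_inv₀ (by linarith [hy0.2])]
    linarith [hy0.1]
  have hlin := add_div_two_le_of_hasDerivWithinAt_one_add hu he hx
  have hlog := abs_le.1 <|
    abs_sub_sub_le_mul_log_of_hasDerivWithinAt_one_add hu he heu hM (by linarith) hx
  exact ⟨by linarith, abs_le.2 ⟨by linarith, by linarith⟩⟩

theorem cubic_perturbation_asymptotics_general (g : ℝ → ℝ)
    (hgo : g =O[nhds 0] fun y : ℝ => |y| ^ 3) :
    ∃ δ : ℝ, 0 < δ ∧ ∀ y : ℝ → ℝ, y 0 ∈ Set.Ioo (-δ) (0 : ℝ) →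
      (∀ x ∈ Set.Ici (0 : ℝ),
        HasDerivWithinAt y ((y x) ^ 2 + g (y x)) (Set.Ici (0 : ℝ)) x) →
      ∀ β ∈ Set.Ico (0 : ℝ) 1,
        ∃ C X : ℝ, 0 < C ∧ 0 < X ∧
          ∀ x : ℝ, X ≤ x → |y x + 1 / x| ≤ C / x ^ (1 + β : ℝ) := by
  obtain ⟨δ, M, hδ, hδ1, hM, hδM, hgM⟩ := exists_small_cubic_bound hgo
  refine ⟨δ, hδ, fun y hy0 hy β hβ => ?_⟩
  have hA : 0 < -(y 0)⁻¹ := neg_pos.2 (inv_lt_zero.2 hy0.2)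
  have hK : 0 ≤ 2 * (2 * M) / (1 - β) := div_nonneg (by positivity) (by linarith [hβ.2])
  refine ⟨2 * (-(y 0)⁻¹ + 2 * (2 * M) / (1 - β)), 1, by positivity, one_pos, fun x hx => ?_⟩
  obtain ⟨hux, hlog⟩ := riccati_neg_inv_estimates hδ1 hM hδM hgM hy0 hy (zero_le_one.trans hx)
  simpa using abs_neg_inv_add_inv_le_div_rpow hx hux hlog hA.le (by positivity) hβ

/-- If g is C³ with g(y) = O(|y|³) near 0, then any solution of y' = y² + g(y) with
sufficiently small negative initial data satisfies, for every β ∈ [0,1),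
y(x) = -1/x + O(x^{-(1+β)}) as x → ∞. -/
theorem cubic_perturbation_asymptotics (g : ℝ → ℝ) (hg : ContDiff ℝ 3 g)
    (hgo : g =O[nhds 0] fun y : ℝ => |y| ^ 3) :
    ∃ δ : ℝ, 0 < δ ∧ ∀ y : ℝ → ℝ, y 0 ∈ Set.Ioo (-δ) (0 : ℝ) →
      (∀ x ∈ Set.Ici (0 : ℝ),
        HasDerivWithinAt y ((y x) ^ 2 + g (y x)) (Set.Ici (0 : ℝ)) x) →
      ∀ β ∈ Set.Ico (0 : ℝ) 1,
        ∃ C X : ℝ, 0 < C ∧ 0 < X ∧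
          ∀ x : ℝ, X ≤ x → |y x + 1 / x| ≤ C / x ^ (1 + β : ℝ) :=
  cubic_perturbation_asymptotics_general g hgo
end
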